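/- Let x, y ∈ ℓ¹(ℤ₃). If Σh(x + y) = Σh(x) + Σh(y) and z(x,y) = 0, then the point (X, Y) ∈ ℝ², where X = ∑_{j=1}^∞ v(x_j) 3^{-j} and Y = ∑_{j=1}^∞ v(y_j) 3^{-j}, lies in the hexagon snowflake fractal S_F. -/

import Mathlib

open scoped Pointwise

/-- `a : ℕ+ → ℤ` is a balanced ternary representation of `t ∈ [-1/2,1/2]`:
all digits are in `{-1,0,1}` and `t = ∑_{j=1}^∞ a_j 3^{-j}`. -/
def IsBalTernRep (a : ℕ+ → ℤ) (t : ℝ) : Prop :=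
  (∀ j : ℕ+, a j = -1 ∨ a j = 0 ∨ a j = 1) ∧ t = ∑' j : ℕ+, (a j : ℝ) / 3 ^ (j : ℕ)

/-- The initial hexagon `H₀`: the square `[-1/2,1/2]²` with the two corner
squares `(1/6,1/2] × (1/6,1/2]` and `[-1/2,-1/6) × [-1/2,-1/6)` removed. -/
def H0 : Set (ℝ × ℝ) :=
  {p | |p.1| ≤ 1 / 2 ∧ |p.2| ≤ 1 / 2 ∧
    ¬(p.1 > 1 / 6 ∧ p.2 > 1 / 6) ∧ ¬(p.1 < -(1 / 6) ∧ p.2 < -(1 / 6))}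

/-- The seven translation vectors used to build the hexagon snowflake fractal. -/
def V : Set (ℝ × ℝ) :=
  {(0, 0), (1 / 3, 0), (0, 1 / 3), (1 / 3, -(1 / 3)), (-(1 / 3), 0), (0, -(1 / 3)),
    (-(1 / 3), 1 / 3)}

/-- The decreasing sequence of sets whose intersection is the hexagon snowflake fractal. -/
noncomputable def G : ℕ → Set (ℝ × ℝ)
  | 0 => H0
  | n + 1 => ⋃ v ∈ V, (fun p => p + v) '' ((1 / 3 : ℝ) • G n)

/-- The hexagon snowflake fractal. -/
noncomputable def SF : Set (ℝ × ℝ) := ⋂ n, G n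

/-- `Σh` for signed Egyptian fractions: the sum of `v(x_j)/(j+1)` where
`v : ZMod 3 → ℤ` is the balanced representative map (`valMinAbs` sends
`0 ↦ 0`, `1 ↦ 1`, `2 ↦ -1`). -/
noncomputable def sigmah3 (x : ℕ+ →₀ ZMod 3) : ℚ :=
  ∑ j ∈ x.support, ((x j).valMinAbs : ℚ) / ((j : ℕ) + 1)

/-- The vector `z(x,y)` with `z_j = x_j` when `x_j = y_j` and `z_j = 0` otherwise. -/
noncomputable def zvec (x y : ℕ+ →₀ ZMod 3) : ℕ+ →₀ ZMod 3 :=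
  Finsupp.zipWith (fun a b => if a = b then a else 0) (by simp) x y


namespace Stmt13Aux

def Dig (a : ℕ+ → ℤ) : Prop := ∀ j, a j = -1 ∨ a j = 0 ∨ a j = 1

noncomputable def S (a : ℕ+ → ℤ) : ℝ := ∑' j : ℕ+, (a j : ℝ) / 3 ^ (j : ℕ)

def shift (a : ℕ+ → ℤ) : ℕ+ → ℤ := fun j => a (j + 1)

lemma dig_shift {a} (ha : Dig a) : Dig (shift a) := fun j => ha (j + 1)

lemma abs_le_one {a : ℕ+ → ℤ} (ha : Dig a) (j : ℕ+) : |(a j : ℝ)| ≤ 1 := by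
  rcases ha j with h | h | h <;> simp [h]

lemma norm_bound {a : ℕ+ → ℤ} (ha : Dig a) (n : ℕ) :
    ‖(a n.succPNat : ℝ) / 3 ^ ((n.succPNat : ℕ))‖ ≤ (1/3 : ℝ) ^ (n + 1) := by
  rw [Nat.succPNat_coe]
  rw [norm_div, Real.norm_eq_abs, Real.norm_eq_abs]
  rw [abs_pow, abs_of_nonneg (by norm_num : (0:ℝ) ≤ 3)]
  rw [div_pow, one_pow, div_le_div_iff₀ (by positivity) (by positivity)]
  calc |(a n.succPNat : ℝ)| * 3 ^ (n+1) ≤ 1 * 3 ^ (n+1) := by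
        exact mul_le_mul_of_nonneg_right (abs_le_one ha _) (by positivity)
    _ = 1 * 3 ^ (n+1) := rfl

lemma summable_geo : Summable (fun n : ℕ => (1/3 : ℝ) ^ (n + 1)) := by
  exact ((summable_geometric_of_lt_one (by norm_num) (by norm_num : (1/3:ℝ) < 1)).mul_right (1/3)).congr (fun n => (pow_succ _ _).symm)

lemma tsum_geo : (∑' n : ℕ, (1/3 : ℝ) ^ (n + 1)) = 1/2 := by
  have h := tsum_geometric_of_lt_one (by norm_num : (0:ℝ) ≤ 1/3) (by norm_num)
  calc (∑' n : ℕ, (1/3 : ℝ) ^ (n + 1)) = ∑' n : ℕ, (1/3:ℝ)^n * (1/3) := by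
        simp [pow_succ]
    _ = (∑' n : ℕ, (1/3:ℝ)^n) * (1/3) := by
        rw [tsum_mul_right]
    _ = 1/2 := by rw [h]; norm_num

lemma summable_nat {a : ℕ+ → ℤ} (ha : Dig a) :
    Summable (fun n : ℕ => (a n.succPNat : ℝ) / 3 ^ ((n.succPNat : ℕ))) :=
  Summable.of_norm_bounded summable_geo (norm_bound ha)

lemma S_eq_nat (a : ℕ+ → ℤ) :
    S a = ∑' n : ℕ, (a n.succPNat : ℝ) / 3 ^ ((n.succPNat : ℕ)) := by
  rw [S, ← Equiv.tsum_eq Equiv.pnatEquivNat.symm (fun j : ℕ+ => (a j : ℝ) / 3 ^ (j : ℕ))]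
  rfl

lemma succPNat_succ (n : ℕ) : n.succPNat + 1 = (n+1).succPNat := rfl

lemma S_rec {a : ℕ+ → ℤ} (ha : Dig a) :
    S a = (a 1 : ℝ) / 3 + (1/3) * S (shift a) := by
  rw [S_eq_nat a, Summable.tsum_eq_zero_add (summable_nat ha)]
  congr 1
  · have h0 : (0:ℕ).succPNat = 1 := rfl
    rw [h0]
    norm_num
  rw [S_eq_nat (shift a), ← tsum_mul_left]
  congr 1
  ext n
  show (a ((n+1).succPNat) : ℝ) / 3 ^ (((n+1).succPNat : ℕ)) =
    1/3 * ((shift a n.succPNat : ℝ) / 3 ^ ((n.succPNat : ℕ)))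
  rw [shift]
  rw [succPNat_succ]
  simp [Nat.succPNat_coe, pow_succ]
  ring

lemma abs_S_le {a : ℕ+ → ℤ} (ha : Dig a) : |S a| ≤ 1/2 := by
  rw [S_eq_nat a]
  calc |∑' n : ℕ, (a n.succPNat : ℝ) / 3 ^ ((n.succPNat : ℕ))|
      ≤ ∑' n : ℕ, ‖(a n.succPNat : ℝ) / 3 ^ ((n.succPNat : ℕ))‖ := by
        simpa using norm_tsum_le_tsum_norm ((summable_nat ha).norm)
    _ ≤ ∑' n : ℕ, (1/3 : ℝ) ^ (n + 1) :=
        Summable.tsum_le_tsum (norm_bound ha) ((summable_nat ha).norm) summable_geo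
    _ = 1/2 := tsum_geo

lemma S_le_sixth {a : ℕ+ → ℤ} (ha : Dig a) (h1 : a 1 ≤ 0) : S a ≤ 1/6 := by
  rw [S_rec ha]
  have h2 : S (shift a) ≤ 1/2 := (abs_le.mp (abs_S_le (dig_shift ha))).2
  have : (a 1 : ℝ) ≤ 0 := by exact_mod_cast h1
  nlinarith

lemma neg_sixth_le_S {a : ℕ+ → ℤ} (ha : Dig a) (h1 : 0 ≤ a 1) : -(1/6) ≤ S a := by
  rw [S_rec ha]
  have h2 : -(1/2) ≤ S (shift a) := (abs_le.mp (abs_S_le (dig_shift ha))).1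
  have : (0:ℝ) ≤ (a 1 : ℝ) := by exact_mod_cast h1
  nlinarith

end Stmt13Aux

namespace Stmt13Aux

lemma mem_G (n : ℕ) : ∀ (a b : ℕ+ → ℤ), Dig a → Dig b →
    (∀ j, a j = b j → a j = 0) → (S a, S b) ∈ G n := by
  induction n with
  | zero =>
    intro a b ha hb hab
    refine ⟨abs_S_le ha, abs_S_le hb, ?_, ?_⟩
    · rintro ⟨hx, hy⟩
      have ha1 : a 1 = 1 := by
        rcases ha 1 with h | h | h
        · exact absurd hx (not_lt.mpr (S_le_sixth ha (by omega)))
        · exact absurd hx (not_lt.mpr (S_le_sixth ha (by omega)))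
        · exact h
      have hb1 : b 1 = 1 := by
        rcases hb 1 with h | h | h
        · exact absurd hy (not_lt.mpr (S_le_sixth hb (by omega)))
        · exact absurd hy (not_lt.mpr (S_le_sixth hb (by omega)))
        · exact h
      have := hab 1 (by rw [ha1, hb1])
      omega
    · rintro ⟨hx, hy⟩
      have ha1 : a 1 = -1 := by
        rcases ha 1 with h | h | h
        · exact h
        · exact absurd hx (not_lt.mpr (neg_sixth_le_S ha (by omega)))
        · exact absurd hx (not_lt.mpr (neg_sixth_le_S ha (by omega)))
      have hb1 : b 1 = -1 := by
        rcases hb 1 with h | h | h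
        · exact h
        · exact absurd hy (not_lt.mpr (neg_sixth_le_S hb (by omega)))
        · exact absurd hy (not_lt.mpr (neg_sixth_le_S hb (by omega)))
      have := hab 1 (by rw [ha1, hb1])
      omega
  | succ n ih =>
    intro a b ha hb hab
    have hmem : (S (shift a), S (shift b)) ∈ G n :=
      ih _ _ (dig_shift ha) (dig_shift hb) (fun j => hab (j + 1))
    have hv : ((a 1 : ℝ) / 3, (b 1 : ℝ) / 3) ∈ V := by
      rcases ha 1 with h1 | h1 | h1 <;> rcases hb 1 with h2 | h2 | h2 <;>
        first
          | (exact absurd (hab 1 (h1.trans h2.symm)) (by omega))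
          | (rw [h1, h2]; simp [V, Prod.ext_iff] <;> norm_num)
    show _ ∈ ⋃ v ∈ V, (fun p => p + v) '' ((1 / 3 : ℝ) • G n)
    refine Set.mem_biUnion hv ?_
    refine ⟨(1/3 : ℝ) • (S (shift a), S (shift b)), Set.smul_mem_smul_set hmem, ?_⟩
    have hra := S_rec ha
    have hrb := S_rec hb
    simp only [Prod.smul_mk, smul_eq_mul, Prod.mk_add_mk]
    rw [Prod.ext_iff]
    constructor
    · simp only []; rw [hra]; ring
    · simp only []; rw [hrb]; ring

lemma valMinAbs_cases : ∀ c : ZMod 3, c.valMinAbs = -1 ∨ c.valMinAbs = 0 ∨ c.valMinAbs = 1 := by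
  decide

lemma valMinAbs_inj : ∀ c d : ZMod 3, c.valMinAbs = d.valMinAbs → c = d := by
  decide

end Stmt13Aux

theorem stmt13 (x y : ℕ+ →₀ ZMod 3)
    (h : sigmah3 (x + y) = sigmah3 x + sigmah3 y) (hz : zvec x y = 0) :
    ((∑' j : ℕ+, ((x j).valMinAbs : ℝ) / 3 ^ (j : ℕ)),
     (∑' j : ℕ+, ((y j).valMinAbs : ℝ) / 3 ^ (j : ℕ))) ∈ SF := by
  have key : ∀ j : ℕ+, (x j).valMinAbs = (y j).valMinAbs → (x j).valMinAbs = 0 := by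
    intro j hj
    have hxy : x j = y j := Stmt13Aux.valMinAbs_inj _ _ hj
    have h0 : zvec x y j = 0 := by rw [hz]; rfl
    rw [zvec, Finsupp.zipWith_apply, if_pos hxy] at h0
    rw [h0]; rfl
  refine Set.mem_iInter.mpr (fun n => ?_)
  exact Stmt13Aux.mem_G n (fun j => (x j).valMinAbs) (fun j => (y j).valMinAbs)
    (fun j => Stmt13Aux.valMinAbs_cases _) (fun j => Stmt13Aux.valMinAbs_cases _) key
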